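/- arXiv:0907.5114 — 2 statements merged into one kernel-verified Lean document; each statement's English description precedes it below -/
import Mathlib

section
/- Let p, q be integers with 1 ≤ p < q and let α ∈ ℤ. If w is a geodesic word representing the element a^α of BS(p,q), then there exist k ≥ 0 and integers β_1, …, β_k, α_0, α_1, …, α_k such that w = a^{β_k} t a^{β_{k−1}} t ⋯ a^{β_1} t a^{α_0} t⁻¹ a^{α_1} t⁻¹ ⋯ t⁻¹ a^{α_k}; in particular the subsequence of letters of w from {t, t⁻¹} equals t^k (t⁻¹)^k. -/
inductive Letter : Type
  | a | A | t | T
  deriving DecidableEq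

def bsRel (p q : ℤ) : Set (FreeGroup Bool) :=
  {FreeGroup.of true * (FreeGroup.of false) ^ p * (FreeGroup.of true)⁻¹ * (FreeGroup.of false) ^ (-q)}

abbrev BS (p q : ℤ) := PresentedGroup (bsRel p q)

def evalLetter (p q : ℤ) : Letter → BS p q
  | .a => PresentedGroup.of false
  | .A => (PresentedGroup.of false)⁻¹
  | .t => PresentedGroup.of true
  | .T => (PresentedGroup.of true)⁻¹

def eval (p q : ℤ) (w : List Letter) : BS p q := (w.map (evalLetter p q)).prod

def aPow (α : ℤ) : List Letter :=
  if 0 ≤ α then List.replicate α.toNat Letter.a else List.replicate (-α).toNat Letter.A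

def Geodesic (p q : ℤ) (w : List Letter) : Prop :=
  ∀ v : List Letter, eval p q v = eval p q w → w.length ≤ v.length

/-- Ranking of letters in the order `t < T < a < A`. -/
def letterIdx : Letter → ℕ
  | .t => 0
  | .T => 1
  | .a => 2
  | .A => 3

/-- Length-lexicographical strict order on words, with letters ordered `t < T < a < A`. -/
def llLt (u v : List Letter) : Prop :=
  u.length < v.length ∨
    (u.length = v.length ∧ List.Lex (· < ·) (u.map letterIdx) (v.map letterIdx))

/-- `IsLlnf p q v w` : `v` is the length-lexicographical normal form of `w`,
i.e. `v` represents the same element as `w` and no word representing this element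
precedes `v` in the length-lexicographical order. -/
def IsLlnf (p q : ℤ) (v w : List Letter) : Prop :=
  eval p q v = eval p q w ∧ ∀ u : List Letter, eval p q u = eval p q w → ¬ llLt u v

/-- A word contains no factors `a a⁻¹` or `a⁻¹ a`. -/
def Reduced (w : List Letter) : Prop :=
  (∀ u v : List Letter, w ≠ u ++ [Letter.a, Letter.A] ++ v) ∧
  (∀ u v : List Letter, w ≠ u ++ [Letter.A, Letter.a] ++ v)

/-- A word is Britton-reduced: it has no factors `a a⁻¹`, `a⁻¹ a`,
`t a^{pμ} t⁻¹` or `t⁻¹ a^{qμ} t` (with `μ ∈ ℤ`). -/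
def BrittonReduced (p q : ℤ) (w : List Letter) : Prop :=
  Reduced w ∧
  (∀ u v : List Letter, ∀ μ : ℤ, w ≠ u ++ [Letter.t] ++ aPow (p * μ) ++ [Letter.T] ++ v) ∧
  (∀ u v : List Letter, ∀ μ : ℤ, w ≠ u ++ [Letter.T] ++ aPow (q * μ) ++ [Letter.t] ++ v)

/-- The t-sequence of a word: its subsequence of letters from `{t, t⁻¹}`. -/
def tSeq (w : List Letter) : List Letter :=
  w.filter (fun c => c == Letter.t || c == Letter.T)

/-- The geodesic length of a group element: the least length of a word representing it. -/
noncomputable def geodesicLength (p q : ℤ) (g : BS p q) : ℕ :=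
  sInf {n : ℕ | ∃ w : List Letter, eval p q w = g ∧ w.length = n}

/-- A valley: every prefix has height `≤ 0` and the total height is `0`,
where the height of a prefix is (number of `t`'s) − (number of `t⁻¹`'s). -/
def IsValley (w : List Letter) : Prop :=
  (∀ u v : List Letter, w = u ++ v → u.count Letter.t ≤ u.count Letter.T) ∧
  w.count Letter.t = w.count Letter.T

/-!
`BS p q` embeds into the HNN extension of `ℤ` identifying `pℤ` with `qℤ`, so Britton's lemma
applies: a word representing a power of `a` and containing `t`-letters contains a pinch
`t a^{pμ} t⁻¹` or `t⁻¹ a^{qμ} t`. Replacing pinches by powers of `a` one at a time shows that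
every valley `t⁻¹ m t` (with `t`-free `m`) of such a word can be undone: `m = a^{qμ}`, or the
valley shares a letter with a factor `t y t⁻¹` where `y = a^{pμ}`. Either way a shorter word
represents the same element (because `p < q`, resp. because `t y t⁻¹ = a^{qμ}` commutes with
`m`), so a geodesic has no valley. Its `t`-sequence is therefore `t^j (t⁻¹)^k`, with `j = k` by
the `t`-exponent sum, and its `t`-free segments are freely reduced, i.e. powers of `a`.
-/

theorem List.append_cons_eq_append_cons_cases {α : Type*} {u u' r r' : List α} {x x' : α}
    (h : u ++ x :: r = u' ++ x' :: r') :
    (u = u' ∧ x = x' ∧ r = r') ∨ (∃ s, u = u' ++ x' :: s ∧ r' = s ++ x :: r) ∨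
      ∃ s, u' = u ++ x :: s ∧ r = s ++ x' :: r' := by
  rcases List.append_eq_append_iff.1 h with ⟨_ | ⟨c, s⟩, rfl, h'⟩ | ⟨_ | ⟨c, s⟩, rfl, h'⟩
  · obtain ⟨rfl, rfl⟩ := List.cons.inj h'
    exact .inl ⟨by simp, rfl, rfl⟩
  · obtain ⟨rfl, rfl⟩ := List.cons.inj h'
    exact .inr (.inr ⟨s, rfl, rfl⟩)
  · obtain ⟨rfl, rfl⟩ := List.cons.inj h'
    exact .inl ⟨by simp, rfl, rfl⟩
  · obtain ⟨rfl, rfl⟩ := List.cons.inj h'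
    exact .inr (.inl ⟨s, rfl, rfl⟩)

theorem List.eq_replicate_append_replicate_of_forall_ne {α : Type*} {x y : α} {l : List α}
    (hl : ∀ c ∈ l, c = x ∨ c = y) (h : ∀ l₁ l₂, l ≠ l₁ ++ y :: x :: l₂) :
    ∃ j k, l = List.replicate j x ++ List.replicate k y := by
  induction l with
  | nil => exact ⟨0, 0, rfl⟩
  | cons c l ih =>
    obtain ⟨j, k, rfl⟩ := ih (fun c hc => hl c (List.mem_cons_of_mem _ hc))
      (fun l₁ l₂ h' => h (c :: l₁) l₂ (by rw [h']; rfl))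
    rcases hl c List.mem_cons_self with rfl | rfl
    · exact ⟨j + 1, k, rfl⟩
    · cases j with
      | zero => exact ⟨0, k + 1, by simp [List.replicate_succ]⟩
      | succ j => exact absurd rfl (h [] (List.replicate j x ++ List.replicate k c))

namespace BS

variable {p q : ℤ}

def a (p q : ℤ) : BS p q := PresentedGroup.of false

def t (p q : ℤ) : BS p q := PresentedGroup.of true

theorem t_mul_a_zpow_mul_inv_t (μ : ℤ) :
    t p q * a p q ^ (p * μ) * (t p q)⁻¹ = a p q ^ (q * μ) := by
  have hrel : t p q * a p q ^ p * (t p q)⁻¹ * a p q ^ (-q) = 1 := by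
    have := PresentedGroup.one_of_mem (rels := bsRel p q) rfl
    simp only [map_mul, map_zpow, map_inv] at this
    exact this
  rw [zpow_neg, mul_inv_eq_one] at hrel
  rw [zpow_mul, zpow_mul, ← conj_zpow, hrel]

theorem inv_t_mul_a_zpow_mul_t (μ : ℤ) :
    (t p q)⁻¹ * a p q ^ (q * μ) * t p q = a p q ^ (p * μ) := by
  rw [← t_mul_a_zpow_mul_inv_t]; group

end BS

section Words

variable {p q : ℤ}

@[simp] theorem eval_nil : eval p q [] = 1 := rfl

@[simp] theorem eval_cons (c : Letter) (w : List Letter) :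
    eval p q (c :: w) = evalLetter p q c * eval p q w := List.prod_cons

@[simp] theorem eval_append (u v : List Letter) :
    eval p q (u ++ v) = eval p q u * eval p q v := by
  simp [eval]

@[simp] theorem evalLetter_a : evalLetter p q .a = BS.a p q := rfl
@[simp] theorem evalLetter_A : evalLetter p q .A = (BS.a p q)⁻¹ := rfl
@[simp] theorem evalLetter_t : evalLetter p q .t = BS.t p q := rfl
@[simp] theorem evalLetter_T : evalLetter p q .T = (BS.t p q)⁻¹ := rfl

theorem aPow_natCast (n : ℕ) : aPow n = List.replicate n .a := by
  simp [aPow]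

theorem aPow_neg_natCast (n : ℕ) : aPow (-n) = List.replicate n .A := by
  simp [aPow]

theorem aPow_cases (γ : ℤ) :
    (∃ n : ℕ, γ = n ∧ aPow γ = List.replicate n .a) ∨
      ∃ n : ℕ, γ = -n ∧ aPow γ = List.replicate n .A := by
  obtain ⟨n, rfl | rfl⟩ := γ.eq_nat_or_neg
  exacts [.inl ⟨n, rfl, aPow_natCast n⟩, .inr ⟨n, rfl, aPow_neg_natCast n⟩]

@[simp] theorem length_aPow (γ : ℤ) : (aPow γ).length = γ.natAbs := by
  rcases aPow_cases γ with ⟨n, rfl, h⟩ | ⟨n, rfl, h⟩ <;> simp [h]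

@[simp] theorem eval_aPow (γ : ℤ) : eval p q (aPow γ) = BS.a p q ^ γ := by
  rcases aPow_cases γ with ⟨n, rfl, h⟩ | ⟨n, rfl, h⟩ <;> simp [h, eval, List.map_replicate]

theorem tSeq_append (u v : List Letter) : tSeq (u ++ v) = tSeq u ++ tSeq v :=
  List.filter_append ..

@[simp] theorem tSeq_nil : tSeq [] = [] := rfl
@[simp] theorem tSeq_cons_a (w : List Letter) : tSeq (.a :: w) = tSeq w := rfl
@[simp] theorem tSeq_cons_A (w : List Letter) : tSeq (.A :: w) = tSeq w := rfl
@[simp] theorem tSeq_cons_t (w : List Letter) : tSeq (.t :: w) = .t :: tSeq w := rfl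
@[simp] theorem tSeq_cons_T (w : List Letter) : tSeq (.T :: w) = .T :: tSeq w := rfl

@[simp] theorem tSeq_aPow (γ : ℤ) : tSeq (aPow γ) = [] := by
  rcases aPow_cases γ with ⟨n, -, h⟩ | ⟨n, -, h⟩ <;> simp [h, tSeq]


theorem exists_eq_append_cons_of_tSeq_eq {w s₁ s₂ : List Letter} {x : Letter}
    (h : tSeq w = s₁ ++ x :: s₂) : ∃ u v, w = u ++ x :: v ∧ tSeq u = s₁ ∧ tSeq v = s₂ := by
  obtain ⟨u, v', rfl, hu, hv'⟩ := List.filter_eq_append_iff.1 h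
  obtain ⟨m, v, rfl, hm, -, hv⟩ := List.filter_eq_cons_iff.1 hv'
  refine ⟨u ++ m, v, by simp, ?_, hv⟩
  simp only [tSeq] at hu ⊢
  rw [List.filter_append, hu, List.filter_eq_nil_iff.2 hm, List.append_nil]

theorem tSeq_append_cons_ne_nil {u v : List Letter} {x : Letter} (hx : x = .t ∨ x = .T) :
    tSeq (u ++ x :: v) ≠ [] := by
  rcases hx with rfl | rfl <;> simp [tSeq_append]

theorem exists_eval_eq_zpow_of_tSeq_eq_nil {m : List Letter} (hm : tSeq m = []) :
    ∃ γ : ℤ, γ.natAbs ≤ m.length ∧ eval p q m = BS.a p q ^ γ := by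
  induction m with
  | nil => exact ⟨0, by simp⟩
  | cons c m ih =>
    cases c with
    | t | T => simp at hm
    | a =>
      obtain ⟨γ, hlen, hγ⟩ := ih hm
      exact ⟨1 + γ, by simp; omega, by simp [hγ, zpow_add]⟩
    | A =>
      obtain ⟨γ, hlen, hγ⟩ := ih hm
      exact ⟨-1 + γ, by simp; omega, by simp [hγ, zpow_add]⟩

theorem Reduced.of_infix {w x : List Letter} (hw : Reduced w) (hx : x <:+: w) : Reduced x := by
  obtain ⟨s, r, rfl⟩ := hx
  exact ⟨fun u v h => hw.1 (s ++ u) (v ++ r) (by simp [h]),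
    fun u v h => hw.2 (s ++ u) (v ++ r) (by simp [h])⟩

theorem Reduced.eq_replicate_of_tSeq_eq_nil {m : List Letter} (hm : Reduced m)
    (ht : tSeq m = []) : ∃ n, m = List.replicate n .a ∨ m = List.replicate n .A := by
  induction m with
  | nil => exact ⟨0, .inl rfl⟩
  | cons c m ih =>
    have ht' : tSeq m = [] := by cases c <;> simp_all
    obtain ⟨n, rfl | rfl⟩ := ih (hm.of_infix (List.suffix_cons c m).isInfix) ht'
    · cases c
      case a => exact ⟨n + 1, .inl rfl⟩
      case A => cases n; exacts [⟨1, .inr rfl⟩, absurd rfl (hm.2 [] _)]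
      all_goals simp at ht
    · cases c
      case A => exact ⟨n + 1, .inr rfl⟩
      case a => cases n; exacts [⟨1, .inl rfl⟩, absurd rfl (hm.1 [] _)]
      all_goals simp at ht

theorem Reduced.eq_aPow_of_tSeq_eq_nil {m : List Letter} (hm : Reduced m) (ht : tSeq m = []) :
    ∃ γ, m = aPow γ := by
  obtain ⟨n, rfl | rfl⟩ := hm.eq_replicate_of_tSeq_eq_nil ht
  exacts [⟨n, (aPow_natCast n).symm⟩, ⟨-n, (aPow_neg_natCast n).symm⟩]

/-- Two factors `x m y` of a word, with `t`-letters `x`, `y` and `t`-free `m`, coincide,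
share an end letter, or are disjoint. -/
theorem tGap_cases {u m v u' m' v' : List Letter} {x y x' y' : Letter}
    (hx : x = .t ∨ x = .T) (hy : y = .t ∨ y = .T) (hx' : x' = .t ∨ x' = .T)
    (hy' : y' = .t ∨ y' = .T) (hm : tSeq m = []) (hm' : tSeq m' = [])
    (h : u ++ x :: (m ++ y :: v) = u' ++ x' :: (m' ++ y' :: v')) :
    (u = u' ∧ x = x' ∧ m = m' ∧ y = y' ∧ v = v') ∨
    (u = u' ++ x' :: m' ∧ y' = x ∧ v' = m ++ y :: v) ∨
    (u' = u ++ x :: m ∧ y = x' ∧ v = m' ++ y' :: v') ∨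
    (∃ s, u = u' ++ x' :: (m' ++ y' :: s)) ∨
    (∃ s, v = s ++ x' :: (m' ++ y' :: v')) := by
  rcases List.append_cons_eq_append_cons_cases h with
    ⟨rfl, rfl, h₁⟩ | ⟨s, rfl, h₁⟩ | ⟨s, rfl, h₁⟩
  · rcases List.append_cons_eq_append_cons_cases h₁ with
      ⟨rfl, rfl, rfl⟩ | ⟨s, rfl, -⟩ | ⟨s, rfl, -⟩
    · exact .inl ⟨rfl, rfl, rfl, rfl, rfl⟩
    · exact absurd hm (tSeq_append_cons_ne_nil hy')
    · exact absurd hm' (tSeq_append_cons_ne_nil hy)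
  · rcases List.append_cons_eq_append_cons_cases h₁ with
      ⟨rfl, rfl, rfl⟩ | ⟨s, rfl, -⟩ | ⟨s, rfl, -⟩
    · exact .inr (.inl ⟨rfl, rfl, rfl⟩)
    · exact absurd hm' (tSeq_append_cons_ne_nil hx)
    · exact .inr (.inr (.inr (.inl ⟨s, rfl⟩)))
  · rcases List.append_cons_eq_append_cons_cases h₁ with
      ⟨rfl, rfl, rfl⟩ | ⟨s, rfl, -⟩ | ⟨s, rfl, h₂⟩
    · exact .inr (.inr (.inl ⟨rfl, rfl, rfl⟩))
    · exact absurd hm (tSeq_append_cons_ne_nil hx')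
    · exact .inr (.inr (.inr (.inr ⟨s, by simpa using h₂⟩)))

theorem append_tFree_append_eq_append_cons_cases {x c s u r : List Letter} {ℓ : Letter}
    (hc : tSeq c = []) (hℓ : ℓ = .t ∨ ℓ = .T) (h : x ++ c ++ s = u ++ ℓ :: r) :
    (∃ s₁, x = u ++ ℓ :: s₁ ∧ r = s₁ ++ c ++ s) ∨ (∃ s₂, s = s₂ ++ ℓ :: r ∧ u = x ++ c ++ s₂) := by
  rw [List.append_assoc] at h
  rcases List.append_eq_append_iff.1 h with ⟨a', rfl, h₁⟩ | ⟨c', rfl, h₁⟩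
  · rcases List.append_eq_append_iff.1 h₁ with ⟨b, rfl, rfl⟩ | ⟨d, rfl, h₂⟩
    · exact .inr ⟨b, rfl, by simp⟩
    · rcases List.cons_eq_append_iff.1 h₂ with ⟨rfl, rfl⟩ | ⟨d', rfl, -⟩
      · exact .inr ⟨[], rfl, by simp⟩
      · exact absurd hc (tSeq_append_cons_ne_nil hℓ)
  · rcases List.cons_eq_append_iff.1 h₁ with ⟨rfl, h₂⟩ | ⟨c'', rfl, rfl⟩
    · rcases List.append_eq_cons_iff.1 h₂ with ⟨rfl, rfl⟩ | ⟨c₁, rfl, -⟩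
      · exact .inr ⟨[], rfl, by simp⟩
      · exact absurd hc (tSeq_append_cons_ne_nil (u := []) hℓ)
    · exact .inl ⟨c'', rfl, by simp⟩

theorem mem_tSeq {w : List Letter} {c : Letter} (hc : c ∈ tSeq w) : c = .t ∨ c = .T := by
  cases c <;> simp_all [tSeq]

theorem count_tSeq {w : List Letter} {c : Letter} (hc : c = .t ∨ c = .T) :
    (tSeq w).count c = w.count c :=
  List.count_filter (by rcases hc with rfl | rfl <;> rfl)

end Words

namespace BS

variable {p q : ℤ}

def tExponent (p q : ℤ) : BS p q →* Multiplicative ℤ :=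
  PresentedGroup.toGroup (f := fun b => if b then .ofAdd 1 else 1) (by rintro r rfl; simp)

@[simp] theorem tExponent_a : tExponent p q (a p q) = 1 := rfl

@[simp] theorem tExponent_t : tExponent p q (t p q) = .ofAdd 1 := rfl

theorem toAdd_tExponent_eval (w : List Letter) :
    (tExponent p q (eval p q w)).toAdd = (w.count .t : ℤ) - w.count .T := by
  induction w with
  | nil => rfl
  | cons c w ih =>
    cases c <;> simp [ih] <;> ring

end BS

theorem count_t_eq_count_T_of_eval_eq_zpow {p q γ : ℤ} {w : List Letter}
    (h : eval p q w = BS.a p q ^ γ) : w.count .t = w.count .T := by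
  have := BS.toAdd_tExponent_eval (p := p) (q := q) w
  rw [h, map_zpow, BS.tExponent_a, one_zpow, toAdd_one] at this
  omega

namespace BS

variable {p q : ℤ}

def mulHom (n : ℤ) : Multiplicative ℤ →* Multiplicative ℤ :=
  AddMonoidHom.toMultiplicative (AddMonoidHom.mulLeft n)

theorem mulHom_injective {n : ℤ} (hn : n ≠ 0) : Function.Injective (mulHom n) :=
  fun _ _ h => Multiplicative.toAdd.injective (mul_left_cancel₀ hn (congrArg (·.toAdd) h))

section HNN

variable (hp : p ≠ 0) (hq : q ≠ 0)

noncomputable section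

def rangeEquiv : (mulHom p).range ≃* (mulHom q).range :=
  (MonoidHom.ofInjective (mulHom_injective hp)).symm.trans
    (MonoidHom.ofInjective (mulHom_injective hq))

theorem rangeEquiv_apply (x : Multiplicative ℤ) :
    rangeEquiv hp hq ⟨mulHom p x, x, rfl⟩ = ⟨mulHom q x, x, rfl⟩ := by
  have : (⟨mulHom p x, x, rfl⟩ : (mulHom p).range) = MonoidHom.ofInjective _ x :=
    Subtype.ext (MonoidHom.ofInjective_apply (mulHom_injective hp)).symm
  rw [rangeEquiv, MulEquiv.trans_apply, this, MulEquiv.symm_apply_apply]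
  exact Subtype.ext (MonoidHom.ofInjective_apply _)

abbrev HNN : Type :=
  HNNExtension (Multiplicative ℤ) (mulHom p).range (mulHom q).range (rangeEquiv hp hq)

theorem t_mul_of_mul_inv_t (μ : ℤ) :
    HNNExtension.t * HNNExtension.of (.ofAdd (p * μ)) * HNNExtension.t⁻¹ =
      (HNNExtension.of (.ofAdd (q * μ)) : HNN hp hq) := by
  have := HNNExtension.equiv_eq_conj (φ := rangeEquiv hp hq) ⟨mulHom p (.ofAdd μ), _, rfl⟩
  rw [rangeEquiv_apply] at this
  exact this.symm

def toHNN : BS p q →* HNN hp hq :=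
  PresentedGroup.toGroup
    (f := fun b => if b then HNNExtension.t else HNNExtension.of (.ofAdd 1)) <| by
    rintro r rfl
    have h := t_mul_of_mul_inv_t hp hq 1
    simp only [mul_one] at h
    simp only [map_mul, map_inv, map_zpow, FreeGroup.lift_apply_of, if_true]
    simp only [Bool.false_eq_true, if_false, ← map_zpow, ← ofAdd_zsmul, smul_eq_mul, mul_one, h]
    rw [← map_mul, ← ofAdd_add, add_neg_cancel, ofAdd_zero, map_one]

def ofHNN : HNN hp hq →* BS p q :=
  HNNExtension.lift (zpowersHom (BS p q) (a p q)) (t p q) <| by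
    rintro ⟨_, x, rfl⟩
    rw [rangeEquiv_apply]
    show t p q * a p q ^ (p * x.toAdd) = a p q ^ (q * x.toAdd) * t p q
    rw [← t_mul_a_zpow_mul_inv_t]
    group

end

theorem ofHNN_comp_toHNN : (ofHNN hp hq).comp (toHNN hp hq) = MonoidHom.id (BS p q) := by
  ext (_ | _) <;> simp [toHNN, ofHNN, a, t]

theorem toHNN_injective : Function.Injective (toHNN hp hq) :=
  Function.LeftInverse.injective (DFunLike.congr_fun (ofHNN_comp_toHNN hp hq))

@[simp] theorem toHNN_a : toHNN hp hq (a p q) = HNNExtension.of (.ofAdd 1) := rfl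

@[simp] theorem toHNN_t : toHNN hp hq (t p q) = HNNExtension.t := rfl

theorem toHNN_a_zpow (γ : ℤ) : toHNN hp hq (a p q ^ γ) = HNNExtension.of (.ofAdd γ) := by
  rw [map_zpow, toHNN_a, ← map_zpow, ← ofAdd_zsmul, smul_eq_mul, mul_one]

/-- The data of the `HNNExtension.ReducedWord` read off a word: the value of the maximal `t`-free
prefix, then for each letter `t^{±1}` its sign and the value of the `t`-free segment after it. -/
def scan : List Letter → Multiplicative ℤ × List (ℤˣ × Multiplicative ℤ)
  | [] => (1, [])
  | .a :: w => (.ofAdd 1 * (scan w).1, (scan w).2)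
  | .A :: w => ((.ofAdd 1)⁻¹ * (scan w).1, (scan w).2)
  | .t :: w => (1, (1, (scan w).1) :: (scan w).2)
  | .T :: w => (1, (-1, (scan w).1) :: (scan w).2)

def tLetter (u : ℤˣ) : Letter := if u = 1 then .t else .T

theorem toHNN_eval (w : List Letter) :
    toHNN hp hq (eval p q w) = HNNExtension.of (scan w).1 *
      ((scan w).2.map fun x => HNNExtension.t ^ (x.1 : ℤ) * HNNExtension.of x.2).prod := by
  induction w with
  | nil => simp [scan]
  | cons c w ih => cases c <;> simp [scan, ih, mul_assoc]

theorem tSeq_eq_nil_of_scan_snd_eq_nil {w : List Letter} (h : (scan w).2 = []) :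
    tSeq w = [] := by
  induction w with
  | nil => rfl
  | cons c w ih => cases c <;> simp_all [scan]

theorem exists_eq_of_scan_snd_eq_cons {w : List Letter} {u : ℤˣ} {g : Multiplicative ℤ}
    {L : List (ℤˣ × Multiplicative ℤ)} (h : (scan w).2 = (u, g) :: L) :
    ∃ m v, w = m ++ tLetter u :: v ∧ tSeq m = [] ∧
      toHNN hp hq (eval p q m) = HNNExtension.of (scan w).1 ∧ scan v = (g, L) := by
  induction w with
  | nil => simp [scan] at h
  | cons c w ih =>
    cases c
    case a | A =>
      obtain ⟨m, v, rfl, hm, hval, hv⟩ := ih h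
      refine ⟨_ :: m, v, rfl, hm, ?_, hv⟩
      simp [scan, hval]
    all_goals
      simp only [scan, List.cons.injEq, Prod.mk.injEq] at h
      obtain ⟨⟨rfl, rfl⟩, rfl⟩ := h
      exact ⟨[], w, by simp [tLetter], rfl, by simp [scan], rfl⟩

theorem exists_eq_of_scan_snd_eq_append_cons {w : List Letter} {u : ℤˣ} {g : Multiplicative ℤ}
    {L₁ L₂ : List (ℤˣ × Multiplicative ℤ)} (h : (scan w).2 = L₁ ++ (u, g) :: L₂) :
    ∃ w₁ v, w = w₁ ++ tLetter u :: v ∧ scan v = (g, L₂) := by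
  induction w generalizing L₁ with
  | nil => simp [scan] at h
  | cons c w ih =>
    cases c
    case a | A =>
      obtain ⟨w₁, v, rfl, hv⟩ := ih h
      exact ⟨_ :: w₁, v, rfl, hv⟩
    all_goals
      cases L₁ with
      | nil =>
        simp only [scan, List.nil_append, List.cons.injEq, Prod.mk.injEq] at h
        obtain ⟨⟨rfl, rfl⟩, rfl⟩ := h
        exact ⟨[], w, by simp [tLetter], rfl⟩
      | cons x L₁ =>
        obtain ⟨w₁, v, rfl, hv⟩ := ih (List.cons.inj h).2
        exact ⟨_ :: w₁, v, rfl, hv⟩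

end HNN

theorem zpow_a_injective (hp : p ≠ 0) (hq : q ≠ 0) :
    Function.Injective (a p q ^ · : ℤ → BS p q) := fun γ δ h => by
  have := congrArg (toHNN hp hq) h
  simp only [toHNN_a_zpow] at this
  exact Multiplicative.ofAdd.injective (HNNExtension.of_injective _ this)

end BS

def IsPinch (p q : ℤ) (x : Letter) (m : List Letter) (y : Letter) : Prop :=
  tSeq m = [] ∧ ((x = .t ∧ y = .T ∧ ∃ μ, eval p q m = BS.a p q ^ (p * μ)) ∨
    (x = .T ∧ y = .t ∧ ∃ μ, eval p q m = BS.a p q ^ (q * μ)))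

/-- **Britton's lemma** for `BS p q`. -/
theorem exists_pinch {p q γ : ℤ} (hp : p ≠ 0) (hq : q ≠ 0) {w : List Letter}
    (hw : eval p q w = BS.a p q ^ γ) (ht : tSeq w ≠ []) :
    ∃ u x m y v, w = u ++ x :: (m ++ y :: v) ∧ IsPinch p q x m y := by
  by_cases hch : (BS.scan w).2.IsChain fun x y =>
      x.2 ∈ HNNExtension.toSubgroup (BS.mulHom p).range (BS.mulHom q).range x.1 → x.1 = y.1
  · refine absurd (BS.tSeq_eq_nil_of_scan_snd_eq_nil ?_) ht
    refine HNNExtension.ReducedWord.toList_eq_nil_of_mem_of_range (BS.rangeEquiv hp hq)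
      ⟨(BS.scan w).1, (BS.scan w).2, hch⟩ ⟨.ofAdd γ, ?_⟩
    rw [HNNExtension.NormalWord.ReducedWord.prod, ← BS.toHNN_eval, hw, BS.toHNN_a_zpow]
  rw [List.isChain_iff_forall_rel_of_append_cons_cons] at hch
  push Not at hch
  obtain ⟨⟨u, g⟩, ⟨u', g'⟩, L₁, L₂, hL, hg, hu⟩ := hch
  obtain ⟨w₁, v, rfl, hv⟩ := BS.exists_eq_of_scan_snd_eq_append_cons hL
  obtain ⟨m, v', rfl, hm, hval, -⟩ := BS.exists_eq_of_scan_snd_eq_cons hp hq (w := v) (by rw [hv])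
  rw [hv] at hval
  refine ⟨w₁, BS.tLetter u, m, BS.tLetter u', v', by simp, hm, ?_⟩
  rcases Int.units_eq_one_or u with rfl | rfl <;> rcases Int.units_eq_one_or u' with rfl | rfl <;>
    simp only [ne_eq, not_true_eq_false] at hu <;> obtain ⟨μ, rfl⟩ := hg
  · refine .inl ⟨rfl, by decide, μ.toAdd, BS.toHNN_injective hp hq ?_⟩
    rw [hval, BS.toHNN_a_zpow]; rfl
  · refine .inr ⟨by decide, rfl, μ.toAdd, BS.toHNN_injective hp hq ?_⟩
    rw [hval, BS.toHNN_a_zpow]; rfl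

namespace IsPinch

variable {p q : ℤ} {x y : Letter} {m : List Letter}

theorem tLetter_left (h : IsPinch p q x m y) : x = .t ∨ x = .T := by
  rcases h.2 with ⟨rfl, -⟩ | ⟨rfl, -⟩ <;> simp

theorem tLetter_right (h : IsPinch p q x m y) : y = .t ∨ y = .T := by
  rcases h.2 with ⟨-, rfl, -⟩ | ⟨-, rfl, -⟩ <;> simp

theorem tSeq_eq (h : IsPinch p q x m y) : tSeq (x :: (m ++ [y])) = [x, y] := by
  rcases h with ⟨hm, ⟨rfl, rfl, -⟩ | ⟨rfl, rfl, -⟩⟩ <;> simp [tSeq_append, hm]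

theorem exists_eval_eq_zpow (h : IsPinch p q x m y) :
    ∃ δ : ℤ, eval p q (x :: (m ++ [y])) = BS.a p q ^ δ := by
  rcases h.2 with ⟨rfl, rfl, μ, hμ⟩ | ⟨rfl, rfl, μ, hμ⟩
  · exact ⟨q * μ, by simp [hμ, ← BS.t_mul_a_zpow_mul_inv_t, mul_assoc]⟩
  · exact ⟨p * μ, by simp [hμ, ← BS.inv_t_mul_a_zpow_mul_t, mul_assoc]⟩

end IsPinch

/-- The valley `t⁻¹ m t` of `u t⁻¹ m t v` can be removed with the defining relation, on its own
or together with an adjacent `t a^{pμ}` or `a^{pμ} t⁻¹`. -/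
def ValleyCollapses (p q : ℤ) (u m v : List Letter) : Prop :=
  (∃ μ, eval p q m = BS.a p q ^ (q * μ)) ∨
  (∃ u₁ y μ, u = u₁ ++ .t :: y ∧ eval p q y = BS.a p q ^ (p * μ)) ∨
  (∃ y v₁ μ, v = y ++ .T :: v₁ ∧ eval p q y = BS.a p q ^ (p * μ))

namespace ValleyCollapses

variable {p q : ℤ} {m v x c c' s : List Letter}

theorem of_replace_left (hc' : tSeq c' = []) (hc : eval p q c = eval p q c')
    (h : ValleyCollapses p q (x ++ c' ++ s) m v) : ValleyCollapses p q (x ++ c ++ s) m v := by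
  rcases h with h | ⟨u₁, y, μ, hu, hy⟩ | h
  · exact .inl h
  · refine .inr (.inl ?_)
    rcases append_tFree_append_eq_append_cons_cases hc' (.inl rfl) hu with
      ⟨s₁, rfl, rfl⟩ | ⟨s₂, rfl, rfl⟩
    · exact ⟨u₁, s₁ ++ c ++ s, μ, by simp, by simpa [hc] using hy⟩
    · exact ⟨x ++ c ++ s₂, y, μ, by simp, hy⟩
  · exact .inr (.inr h)

theorem of_replace_right {u : List Letter} (hc' : tSeq c' = []) (hc : eval p q c = eval p q c')
    (h : ValleyCollapses p q u m (x ++ c' ++ s)) : ValleyCollapses p q u m (x ++ c ++ s) := by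
  rcases h with h | h | ⟨y, v₁, μ, hv, hy⟩
  · exact .inl h
  · exact .inr (.inl h)
  · refine .inr (.inr ?_)
    rcases append_tFree_append_eq_append_cons_cases hc' (.inr rfl) hv with
      ⟨s₁, rfl, rfl⟩ | ⟨s₂, rfl, rfl⟩
    · exact ⟨y, s₁ ++ c ++ s, μ, by simp, hy⟩
    · exact ⟨x ++ c ++ s₂, v₁, μ, by simp, by simpa [hc] using hy⟩

end ValleyCollapses

theorem valleyCollapses_of_eval_eq_zpow {p q γ : ℤ} (hp : p ≠ 0) (hq : q ≠ 0)
    {u m v : List Letter} (h : eval p q (u ++ .T :: (m ++ .t :: v)) = BS.a p q ^ γ)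
    (hm : tSeq m = []) : ValleyCollapses p q u m v := by
  induction hn : (tSeq (u ++ .T :: (m ++ .t :: v))).length using Nat.strong_induction_on
    generalizing u v with
  | _ n ih =>
    obtain ⟨u', x, m', y, v', hw, hpinch⟩ :=
      exists_pinch hp hq h (tSeq_append_cons_ne_nil (.inr rfl))
    obtain ⟨δ, hδ⟩ := hpinch.exists_eval_eq_zpow
    rcases tGap_cases (.inr rfl) (.inl rfl) hpinch.tLetter_left hpinch.tLetter_right hm hpinch.1 hw
      with ⟨rfl, rfl, rfl, rfl, rfl⟩ | ⟨rfl, rfl, rfl⟩ | ⟨rfl, rfl, rfl⟩ | ⟨s, rfl⟩ | ⟨s, rfl⟩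
    · obtain ⟨-, ⟨h, -⟩ | ⟨-, -, hμ⟩⟩ := hpinch
      exacts [absurd h (by decide), .inl hμ]
    · obtain ⟨-, ⟨rfl, -, μ, hμ⟩ | ⟨-, h, -⟩⟩ := hpinch
      exacts [.inr (.inl ⟨u', m', μ, rfl, hμ⟩), absurd h (by decide)]
    · obtain ⟨-, ⟨-, rfl, μ, hμ⟩ | ⟨h, -⟩⟩ := hpinch
      exacts [.inr (.inr ⟨m', v', μ, rfl, hμ⟩), absurd h (by decide)]
    -- A pinch away from the valley is replaced by `a ^ δ`, which removes two `t`-letters.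
    · rw [show u' ++ x :: (m' ++ y :: s) = u' ++ x :: (m' ++ [y]) ++ s by simp] at h hn ⊢
      refine (ih _ ?_ (u := u' ++ aPow δ ++ s) ?_ rfl).of_replace_left (tSeq_aPow δ) (by simp [hδ])
      · simp only [← hn, tSeq_append, tSeq_cons_T, tSeq_cons_t, hpinch.tSeq_eq, tSeq_aPow,
          List.length_append]
        simp
      · generalize x :: (m' ++ [y]) = c at hδ h ⊢
        simp [← h, hδ]
    · rw [show s ++ x :: (m' ++ y :: v') = s ++ x :: (m' ++ [y]) ++ v' by simp] at h hn ⊢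
      refine (ih _ ?_ (v := s ++ aPow δ ++ v') ?_ rfl).of_replace_right (tSeq_aPow δ) (by simp [hδ])
      · simp only [← hn, tSeq_append, tSeq_cons_T, tSeq_cons_t, hpinch.tSeq_eq, tSeq_aPow,
          List.length_append]
        simp
      · generalize x :: (m' ++ [y]) = c at hδ h ⊢
        simp [← h, hδ]

namespace Geodesic

variable {p q : ℤ} {w : List Letter}

theorem reduced (hw : Geodesic p q w) : Reduced w := by
  refine ⟨fun u v h => ?_, fun u v h => ?_⟩ <;>
    have := hw (u ++ v) (by simp [h]) <;> simp [h] at this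

theorem not_valleyCollapses (hp : 0 < p) (hpq : p < q) {u m v : List Letter}
    (hw : Geodesic p q (u ++ .T :: (m ++ .t :: v))) (hm : tSeq m = []) :
    ¬ ValleyCollapses p q u m v := by
  obtain ⟨γ, hγm, hγ⟩ := exists_eval_eq_zpow_of_tSeq_eq_nil (p := p) (q := q) hm
  have hconj (μ : ℤ) : Commute (BS.t p q * BS.a p q ^ (p * μ) * (BS.t p q)⁻¹) (BS.a p q ^ γ) := by
    rw [BS.t_mul_a_zpow_mul_inv_t]; exact Commute.zpow_zpow_self _ _ _
  rintro (⟨μ, hμ⟩ | ⟨u₁, y, μ, rfl, hy⟩ | ⟨y, v₁, μ, rfl, hy⟩)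
  · have hγμ : γ = q * μ := BS.zpow_a_injective hp.ne' (by omega) (hγ.symm.trans hμ)
    have := hw (u ++ aPow (p * μ) ++ v) (by
      simp only [eval_append, eval_cons, eval_aPow, evalLetter_t, evalLetter_T, hμ]
      rw [← BS.inv_t_mul_a_zpow_mul_t]; group)
    have hpq' : (p * μ).natAbs ≤ (q * μ).natAbs := by
      rw [Int.natAbs_mul, Int.natAbs_mul]; exact Nat.mul_le_mul_right _ (by omega)
    simp at this
    omega
  · have := hw (u₁ ++ m ++ .t :: (y ++ v)) (by
      simp only [eval_append, eval_cons, evalLetter_t, evalLetter_T, hy, hγ]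
      calc _ = eval p q u₁ * (BS.a p q ^ γ * (BS.t p q * BS.a p q ^ (p * μ) * (BS.t p q)⁻¹)) *
              BS.t p q * eval p q v := by group
        _ = _ := by rw [← (hconj μ).eq]; group)
    simp at this
    omega
  · have := hw (u ++ y ++ .T :: (m ++ v₁)) (by
      simp only [eval_append, eval_cons, evalLetter_t, evalLetter_T, hy, hγ]
      calc _ = eval p q u * (BS.t p q)⁻¹ *
              ((BS.t p q * BS.a p q ^ (p * μ) * (BS.t p q)⁻¹) * BS.a p q ^ γ) * eval p q v₁ := by
            group
        _ = _ := by rw [(hconj μ).eq]; group)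
    simp at this
    omega

theorem tSeq_eq_replicate_append_replicate {γ : ℤ} (hp : 0 < p) (hpq : p < q)
    (hw : Geodesic p q w) (h : eval p q w = BS.a p q ^ γ) :
    ∃ k, tSeq w = List.replicate k .t ++ List.replicate k .T := by
  obtain ⟨j, k, hjk⟩ := List.eq_replicate_append_replicate_of_forall_ne (l := tSeq w)
    (fun _ => mem_tSeq) fun s₁ s₂ hs => by
      obtain ⟨u, r, rfl, -, hr⟩ := exists_eq_append_cons_of_tSeq_eq hs
      obtain ⟨m, v, rfl, hm, -⟩ := exists_eq_append_cons_of_tSeq_eq (s₁ := []) hr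
      exact hw.not_valleyCollapses hp hpq hm
        (valleyCollapses_of_eval_eq_zpow hp.ne' (by omega) h hm)
  have hcount := count_t_eq_count_T_of_eval_eq_zpow h
  rw [← count_tSeq (.inl rfl), ← count_tSeq (.inr rfl), hjk] at hcount
  obtain rfl : j = k := by simpa [List.count_replicate] using hcount
  exact ⟨j, hjk⟩

end Geodesic

theorem Reduced.exists_eq_of_tSeq_eq {w : List Letter} (hw : Reduced w) {k : ℕ}
    (ht : tSeq w = List.replicate k .t ++ List.replicate k .T) :
    ∃ (βs αs : Fin k → ℤ) (α0 : ℤ),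
      w = (List.ofFn fun i : Fin k => aPow (βs i) ++ [Letter.t]).flatten ++ aPow α0 ++
          (List.ofFn fun i : Fin k => Letter.T :: aPow (αs i)).flatten := by
  induction k generalizing w with
  | zero =>
    obtain ⟨γ, rfl⟩ := hw.eq_aPow_of_tSeq_eq_nil (by simpa using ht)
    exact ⟨Fin.elim0, Fin.elim0, γ, by simp⟩
  | succ k ih =>
    obtain ⟨b, w₁, rfl, hb, hw₁⟩ := exists_eq_append_cons_of_tSeq_eq (s₁ := []) (x := .t)
      (s₂ := List.replicate k .t ++ List.replicate (k + 1) .T)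
      (ht.trans (by simp [List.replicate_succ]))
    obtain ⟨w₂, b', rfl, hw₂, hb'⟩ := exists_eq_append_cons_of_tSeq_eq (s₂ := []) (x := .T)
      (s₁ := List.replicate k .t ++ List.replicate k .T)
      (hw₁.trans (by simp [List.replicate_succ']))
    obtain ⟨β, rfl⟩ := (hw.of_infix ⟨[], _, rfl⟩).eq_aPow_of_tSeq_eq_nil hb
    obtain ⟨α', rfl⟩ :=
      (hw.of_infix ⟨aPow β ++ .t :: w₂ ++ [.T], [], by simp⟩).eq_aPow_of_tSeq_eq_nil hb'
    obtain ⟨βs, αs, α0, rfl⟩ := ih (hw.of_infix ⟨aPow β ++ [.t], .T :: aPow α', by simp⟩) hw₂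
    refine ⟨Fin.cons β βs, Fin.snoc αs α', α0, ?_⟩
    rw [List.ofFn_succ, List.ofFn_succ']
    simp

theorem geodesic_horocyclic_shape (p q α : ℤ) (hp : 1 ≤ p) (hpq : p < q)
    (w : List Letter) (hrep : eval p q w = eval p q (aPow α)) (hgeo : Geodesic p q w) :
    ∃ (k : ℕ) (βs αs : Fin k → ℤ) (α0 : ℤ),
      w = (List.ofFn fun i : Fin k => aPow (βs i) ++ [Letter.t]).flatten ++ aPow α0 ++
          (List.ofFn fun i : Fin k => Letter.T :: aPow (αs i)).flatten ∧
      tSeq w = List.replicate k Letter.t ++ List.replicate k Letter.T := by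
  rw [eval_aPow] at hrep
  obtain ⟨k, hk⟩ := hgeo.tSeq_eq_replicate_append_replicate hp hpq hrep
  obtain ⟨βs, αs, α0, hw⟩ := hgeo.reduced.exists_eq_of_tSeq_eq hk
  exact ⟨k, βs, αs, α0, hw, hk⟩
end

section
/- Let p, q be integers with 1 ≤ p < q. The one-step rewriting relation →_BS of the string rewriting system BS on words over {a, a⁻¹, t, t⁻¹} is terminating: there is no infinite sequence of words w_0 →_BS w_1 →_BS w_2 →_BS ⋯ (equivalently, the converse of →_BS is a well-founded relation on words). -/
/-- The rules of the string rewriting system `BS`. -/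
def bsRules (p q : ℤ) : List (List Letter × List Letter) :=
  [([Letter.a, Letter.A], []),
   ([Letter.A, Letter.a], []),
   ([Letter.t, Letter.T], []),
   ([Letter.T, Letter.t], []),
   (List.replicate q.toNat Letter.a ++ [Letter.t], Letter.t :: List.replicate p.toNat Letter.a),
   ([Letter.A, Letter.t],
     List.replicate (q - 1).toNat Letter.a ++ [Letter.t] ++ List.replicate p.toNat Letter.A),
   (List.replicate p.toNat Letter.a ++ [Letter.T], Letter.T :: List.replicate q.toNat Letter.a),
   ([Letter.A, Letter.T],
     List.replicate (p - 1).toNat Letter.a ++ [Letter.T] ++ List.replicate q.toNat Letter.A)]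

/-- One rewriting step of the system `BS`: replace a factor that is a left-hand
side of a rule by the corresponding right-hand side. -/
def Step (p q : ℤ) (u v : List Letter) : Prop :=
  ∃ (x y l r : List Letter), (l, r) ∈ bsRules p q ∧ u = x ++ l ++ y ∧ v = x ++ r ++ y

/-! ### Termination measure -/

/-- Multiplier of a letter for the termination weight. -/
def smW (p q : ℤ) : Letter → ℕ
  | .t => p.toNat * q.toNat + 1
  | .T => q.toNat * q.toNat + 1
  | _ => 1

/-- Coefficient of a letter for the termination weight. -/
def cfW (q : ℤ) : Letter → ℕ
  | .A => q.toNat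
  | _ => 1

/-- Product of multipliers of the letters of a word. -/
def sW (p q : ℤ) : List Letter → ℕ
  | [] => 1
  | c :: w => smW p q c * sW p q w

/-- Termination weight of a word: each letter contributes its coefficient times
the product of the multipliers of the letters to its right. -/
def fW (p q : ℤ) : List Letter → ℕ
  | [] => 0
  | c :: w => cfW q c * sW p q w + fW p q w

lemma smW_pos (p q : ℤ) (c : Letter) : 0 < smW p q c := by
  cases c <;> simp [smW]

lemma sW_pos (p q : ℤ) (w : List Letter) : 0 < sW p q w := by
  induction w with
  | nil => simp [sW]
  | cons c w ih => simpa [sW] using Nat.mul_pos (smW_pos p q c) ih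

lemma sW_append (p q : ℤ) (u v : List Letter) :
    sW p q (u ++ v) = sW p q u * sW p q v := by
  induction u with
  | nil => simp [sW]
  | cons c u ih => simp [sW, ih, Nat.mul_assoc]

lemma fW_append (p q : ℤ) (u v : List Letter) :
    fW p q (u ++ v) = fW p q u * sW p q v + fW p q v := by
  induction u with
  | nil => simp [fW]
  | cons c u ih => simp [fW, sW, ih, sW_append]; ring

lemma sW_replicate_a (p q : ℤ) (n : ℕ) : sW p q (List.replicate n Letter.a) = 1 := by
  induction n with
  | zero => simp [sW]
  | succ n ih => simp [List.replicate_succ, sW, smW, ih]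

lemma sW_replicate_A (p q : ℤ) (n : ℕ) : sW p q (List.replicate n Letter.A) = 1 := by
  induction n with
  | zero => simp [sW]
  | succ n ih => simp [List.replicate_succ, sW, smW, ih]

lemma fW_replicate_a (p q : ℤ) (n : ℕ) : fW p q (List.replicate n Letter.a) = n := by
  induction n with
  | zero => simp [fW]
  | succ n ih => simp [List.replicate_succ, fW, cfW, sW_replicate_a, ih]; omega

lemma fW_replicate_A (p q : ℤ) (n : ℕ) :
    fW p q (List.replicate n Letter.A) = n * q.toNat := by
  induction n with
  | zero => simp [fW]
  | succ n ih => simp [List.replicate_succ, fW, cfW, sW_replicate_A, ih]; ring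

/-- For each rule, the weight strictly decreases and the multiplier weakly decreases. -/
lemma rule_decrease {p q : ℤ} (hp : 1 ≤ p) (hpq : p < q) {l r : List Letter}
    (hm : (l, r) ∈ bsRules p q) :
    fW p q r < fW p q l ∧ sW p q r ≤ sW p q l := by
  obtain ⟨P1, hp1⟩ : ∃ m, p.toNat = m + 1 := ⟨p.toNat - 1, by omega⟩
  obtain ⟨Q1, hq1⟩ : ∃ m, q.toNat = m + 1 := ⟨q.toNat - 1, by omega⟩
  have hp1' : (p - 1).toNat = P1 := by omega
  have hq1' : (q - 1).toNat = Q1 := by omega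
  have hPQ : P1 < Q1 := by omega
  simp only [bsRules, List.mem_cons, List.not_mem_nil, or_false, List.mem_singleton] at hm
  rcases hm with h | h | h | h | h | h | h | h <;>
    (rw [Prod.mk.injEq] at h; obtain ⟨hl, hr⟩ := h; subst hl hr) <;>
    constructor <;>
    simp [fW, sW, smW, cfW, fW_append, sW_append, hp1, hq1, hp1', hq1',
      fW_replicate_a, fW_replicate_A, sW_replicate_a, sW_replicate_A] <;>
    nlinarith [hPQ, sq_nonneg (Q1 + 1), Nat.zero_le (P1 * Q1), Nat.zero_le (Q1 * Q1),
      Nat.mul_le_mul_right ((Q1 + 1) * (Q1 + 1) + 1) (show P1 + 1 ≤ Q1 by omega)]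

lemma fW_step {p q : ℤ} (hp : 1 ≤ p) (hpq : p < q) {u v : List Letter}
    (h : Step p q u v) : fW p q v < fW p q u := by
  obtain ⟨x, y, l, r, hm, hu, hv⟩ := h
  obtain ⟨h1, h2⟩ := rule_decrease hp hpq hm
  subst hu hv
  rw [fW_append, fW_append, fW_append, fW_append]
  have hy := sW_pos p q y
  have e1 : fW p q x * sW p q r ≤ fW p q x * sW p q l := Nat.mul_le_mul_left _ h2
  have e3 : fW p q x * sW p q r + fW p q r < fW p q x * sW p q l + fW p q l := by omega
  have e2 := Nat.mul_lt_mul_of_lt_of_le e3 (le_refl (sW p q y)) hy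
  omega

theorem bs_rewriting_terminating (p q : ℤ) (hp : 1 ≤ p) (hpq : p < q) :
    (¬ ∃ f : ℕ → List Letter, ∀ n : ℕ, Step p q (f n) (f (n + 1))) ∧
    WellFounded (fun v u : List Letter => Step p q u v) := by
  have hwf : WellFounded (fun v u : List Letter => Step p q u v) := by
    have : Subrelation (fun v u : List Letter => Step p q u v)
        (InvImage (· < ·) (fW p q)) := fun h => fW_step hp hpq h
    exact Subrelation.wf this (InvImage.wf _ Nat.lt_wfRel.wf)
  refine ⟨?_, hwf⟩
  rintro ⟨f, hf⟩
  have key : ∀ n : ℕ, fW p q (f n) + n ≤ fW p q (f 0) := by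
    intro n
    induction n with
    | zero => omega
    | succ n ih =>
      have := fW_step hp hpq (hf n)
      omega
  have := key (fW p q (f 0) + 1)
  omega
end
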